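/- (Main theorem.) Let n ≥ 2, let f : ℝⁿ → ℝⁿ be C¹ and η : ℝⁿ → ℝ be C². Let u ∈ ℝⁿ, s₊ ≥ 0, and let S : ℝ → ℝⁿ and σ : ℝ → ℝ be differentiable at s₊ with S(s₊) ≠ u. Write u₊ := S(s₊), A₊ := Df(u₊), P₊ := ∇²η(u₊). Assume: (a) P₊ is symmetric positive definite and P₊·A₊ is symmetric; (b) A₊ has n distinct real eigenvalues a₁ < a₂ < … < aₙ with corresponding nonzero eigenvectors r₁, …, rₙ; (c) the Lax 1-shock inequalities at the right state: a₁ < σ(s₊) < a₂; (d) the linearized Rankine–Hugoniot equation σ′(s₊)(u₊ − u) = (A₊ − σ(s₊) I) S′(s₊) holds, and (σ′(s₊), S′(s₊)) ≠ (0, 0); (e) condition (i′): σ′(s₊) ≤ 0; (f) condition (ii′): the derivative at s₊ of the map s ↦ η(u|S(s)) is ≥ 0, where η(u|v) := η(u) − η(v) − ∇η(v)·(u − v). Then the Lopatinski condition holds at (u, u₊, σ(s₊)): det [ (u₊ − u) r₂ r₃ … rₙ ] ≠ 0, where the n×n matrix has columns u₊ − u, r₂, …, rₙ. -/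

import Mathlib

open Matrix

/-- The Jacobian matrix of `f : ℝⁿ → ℝⁿ` at `v`. -/
noncomputable def jacMatrix {n : ℕ} (f : (Fin n → ℝ) → (Fin n → ℝ))
    (v : Fin n → ℝ) : Matrix (Fin n) (Fin n) ℝ :=
  Matrix.of fun i j => fderiv ℝ f v (Pi.single j 1) i

/-- The Hessian matrix of `η : ℝⁿ → ℝ` at `v`. -/
noncomputable def hessMatrix {n : ℕ} (η : (Fin n → ℝ) → ℝ)
    (v : Fin n → ℝ) : Matrix (Fin n) (Fin n) ℝ :=
  Matrix.of fun i j =>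
    fderiv ℝ (fun w => fderiv ℝ η w (Pi.single j 1)) v (Pi.single i 1)

/-- The relative entropy `η(u|v) := η(u) − η(v) − ∇η(v)·(u − v)`. -/
noncomputable def relEntropy {n : ℕ} (η : (Fin n → ℝ) → ℝ)
    (u v : Fin n → ℝ) : ℝ :=
  η u - η v - fderiv ℝ η v (u - v)


private lemma pi_sum_single {n : ℕ} (x : Fin n → ℝ) :
    x = ∑ i, x i • (Pi.single i 1 : Fin n → ℝ) := by
  funext j
  simp [Finset.sum_apply, Pi.single_apply, mul_ite, Finset.sum_ite_eq]

private lemma bilin_apply {n : ℕ} (B : (Fin n → ℝ) →L[ℝ] ((Fin n → ℝ) →L[ℝ] ℝ))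
    (x y : Fin n → ℝ) :
    B x y = ∑ i, ∑ j, x i * y j * B (Pi.single i 1) (Pi.single j 1) := by
  conv_lhs => rw [pi_sum_single x, pi_sum_single y]
  simp only [map_sum, _root_.map_smul, ContinuousLinearMap.sum_apply,
    ContinuousLinearMap.smul_apply, smul_eq_mul, Finset.mul_sum]
  rw [Finset.sum_comm]
  exact Finset.sum_congr rfl fun i _ => Finset.sum_congr rfl fun j _ => by ring

private lemma symm_dot {n : ℕ} (M : Matrix (Fin n) (Fin n) ℝ) (hM : M.IsSymm)
    (x y : Fin n → ℝ) : x ⬝ᵥ M.mulVec y = y ⬝ᵥ M.mulVec x := by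
  rw [Matrix.dotProduct_mulVec, ← Matrix.mulVec_transpose, hM.eq, dotProduct_comm]

private lemma hess_entry {n : ℕ} (η : (Fin n → ℝ) → ℝ) (hη : ContDiff ℝ 2 η)
    (w : Fin n → ℝ) (i j : Fin n) :
    hessMatrix η w i j
      = fderiv ℝ (fderiv ℝ η) w (Pi.single i 1) (Pi.single j 1) := by
  have hdiff : DifferentiableAt ℝ (fderiv ℝ η) w :=
    ((hη.fderiv_right (m := 1) (by norm_num)).differentiable one_ne_zero).differentiableAt
  have h := fderiv_clm_apply (𝕜 := ℝ) hdiff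
      (differentiableAt_const (Pi.single j 1 : Fin n → ℝ))
  simp only [hessMatrix, Matrix.of_apply]
  rw [h]
  simp [fderiv_const]

private lemma relEntropy_hasDerivAt {n : ℕ} (η : (Fin n → ℝ) → ℝ)
    (hη : ContDiff ℝ 2 η) (u : Fin n → ℝ) (S : ℝ → (Fin n → ℝ))
    (v' : Fin n → ℝ) (t : ℝ) (hS : HasDerivAt S v' t) :
    HasDerivAt (fun s => relEntropy η u (S s))
      (fderiv ℝ (fderiv ℝ η) (S t) v' (S t - u)) t := by
  have hηd : Differentiable ℝ η := hη.differentiable (by norm_num)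
  have hfd : ContDiff ℝ 1 (fderiv ℝ η) := hη.fderiv_right (by norm_num)
  have h1 : HasDerivAt (fun s => η (S s)) (fderiv ℝ η (S t) v') t :=
    (hηd.differentiableAt.hasFDerivAt.comp_hasDerivAt t hS)
  have h2 : HasDerivAt (fun s => fderiv ℝ η (S s))
      (fderiv ℝ (fderiv ℝ η) (S t) v') t :=
    ((hfd.differentiable one_ne_zero).differentiableAt.hasFDerivAt.comp_hasDerivAt t hS)
  have h3 : HasDerivAt (fun s => u - S s) (-v') t := hS.const_sub u
  have h4 := h2.clm_apply h3
  have h5 := ((hasDerivAt_const t (η u)).sub h1).sub h4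
  have h6 : (fun s => relEntropy η u (S s))
      = fun s => η u - η (S s) - fderiv ℝ η (S s) (u - S s) := rfl
  rw [h6]
  refine h5.congr_deriv ?_
  have : (u - S t) = -(S t - u) := by abel
  rw [this, map_neg, map_neg]
  ring


private lemma sum_dot {n : ℕ} (f : Fin n → Fin n → ℝ) (y : Fin n → ℝ) :
    (∑ j, f j) ⬝ᵥ y = ∑ j, (f j ⬝ᵥ y) := by
  simp only [dotProduct, Finset.sum_apply, Finset.sum_mul]
  exact Finset.sum_comm

private lemma dot_sum {n : ℕ} (y : Fin n → ℝ) (f : Fin n → Fin n → ℝ) :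
    y ⬝ᵥ (∑ j, f j) = ∑ j, (y ⬝ᵥ f j) := by
  simp only [dotProduct, Finset.sum_apply, Finset.mul_sum]
  exact Finset.sum_comm

private lemma mulVec_sum' {n : ℕ} (M : Matrix (Fin n) (Fin n) ℝ)
    (g : Fin n → ℝ) (w : Fin n → Fin n → ℝ) :
    M.mulVec (∑ j, g j • w j) = ∑ j, g j • M.mulVec (w j) := by
  rw [← Matrix.mulVecLin_apply, map_sum]
  exact Finset.sum_congr rfl fun j _ => by
    rw [_root_.map_smul, Matrix.mulVecLin_apply]

private lemma key_alg {n : ℕ} (hn : 2 ≤ n)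
    (P A : Matrix (Fin n) (Fin n) ℝ)
    (hP : P.PosDef) (hPA : (P * A).IsSymm)
    (a : Fin n → ℝ) (r : Fin n → (Fin n → ℝ))
    (hb1 : StrictMono a) (hb2 : ∀ j, r j ≠ 0)
    (hb3 : ∀ j, A.mulVec (r j) = a j • r j)
    (sp σ' : ℝ) (d v' : Fin n → ℝ)
    (hc1 : a ⟨0, (by omega : 0 + 0 < n)⟩ < sp) (hc2 : sp < a ⟨1, (by omega : 0 + 1 < n)⟩)
    (hdne : d ≠ 0)
    (hd1 : σ' • d = A.mulVec v' - sp • v')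
    (hd2 : ¬(σ' = 0 ∧ v' = 0))
    (he : σ' ≤ 0)
    (hf' : 0 ≤ v' ⬝ᵥ P.mulVec d) :
    (Matrix.of fun i j : Fin n =>
      if j = (⟨0, (by omega : 0 + 0 < n)⟩ : Fin n) then d i else r j i).det ≠ 0 := by
  intro hdet
  have hz0lt : 0 < n := by omega
  have hz1lt : 1 < n := by omega
  set z0 : Fin n := ⟨0, hz0lt⟩ with hz0def
  set z1 : Fin n := ⟨1, hz1lt⟩ with hz1def
  have hc1' : a z0 < sp := hc1
  have hc2' : sp < a z1 := hc2
  -- P symmetric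
  have hPsymm : P.IsSymm := by
    have h := hP.isHermitian
    rwa [Matrix.IsHermitian, Matrix.conjTranspose_eq_transpose_of_trivial] at h
  have hane : ∀ j k : Fin n, j ≠ k → a j ≠ a k := fun j k h => hb1.injective.ne h
  -- P-orthogonality of eigenvectors
  have horth : ∀ j k, j ≠ k → r j ⬝ᵥ P.mulVec (r k) = 0 := by
    intro j k hjk
    have h1 : r j ⬝ᵥ (P * A).mulVec (r k) = a k * (r j ⬝ᵥ P.mulVec (r k)) := by
      rw [← Matrix.mulVec_mulVec, hb3, Matrix.mulVec_smul, dotProduct_smul,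
        smul_eq_mul]
    have h2 : r j ⬝ᵥ (P * A).mulVec (r k) = a j * (r j ⬝ᵥ P.mulVec (r k)) := by
      rw [symm_dot _ hPA, ← Matrix.mulVec_mulVec, hb3, Matrix.mulVec_smul,
        dotProduct_smul, smul_eq_mul, symm_dot _ hPsymm]
    have h4 := h1.symm.trans h2
    have h3 : (a k - a j) * (r j ⬝ᵥ P.mulVec (r k)) = 0 := by ring_nf; ring_nf at h4; linarith
    rcases mul_eq_zero.mp h3 with h | h
    · exact absurd (by linarith : a j = a k) (hane j k hjk)
    · exact h
  -- eigenvectors are linearly independent, hence a basis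
  have hli : LinearIndependent ℝ r := by
    apply Module.End.eigenvectors_linearIndependent' (Matrix.mulVecLin A) a hb1.injective
    intro j
    refine ⟨?_, hb2 j⟩
    rw [Module.End.mem_eigenspace_iff]
    simpa [Matrix.mulVecLin_apply] using hb3 j
  haveI : Nonempty (Fin n) := ⟨z0⟩
  let Bs : Module.Basis (Fin n) ℝ (Fin n → ℝ) :=
    basisOfLinearIndependentOfCardEqFinrank hli (by simp)
  have hBs : ⇑Bs = r := coe_basisOfLinearIndependentOfCardEqFinrank _ _
  set c : Fin n → ℝ := fun j => Bs.repr d j with hcdef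
  set b : Fin n → ℝ := fun j => Bs.repr v' j with hbdef
  have hd' : d = ∑ j, c j • r j := by
    conv_lhs => rw [← Bs.sum_repr d]
    exact Finset.sum_congr rfl fun j _ => by rw [hBs]
  have hv' : v' = ∑ j, b j • r j := by
    conv_lhs => rw [← Bs.sum_repr v']
    exact Finset.sum_congr rfl fun j _ => by rw [hBs]
  have huniq : ∀ g : Fin n → ℝ, ∑ j, g j • r j = 0 → ∀ j, g j = 0 :=
    fun g hg => Fintype.linearIndependent_iff.mp hli g hg
  -- from det = 0, get a vanishing linear combination of the columns
  obtain ⟨x, hx0, hxv⟩ := Matrix.exists_mulVec_eq_zero_iff.mpr hdet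
  have hxv' : (Matrix.of fun i j : Fin n =>
      if j = z0 then d i else r j i) *ᵥ x = 0 := hxv
  have hsum : ∑ j : Fin n, x j • (if j = z0 then d else r j) = 0 := by
    funext i
    have hi := congrFun hxv' i
    simp only [Matrix.mulVec, dotProduct, Matrix.of_apply, Pi.zero_apply] at hi
    simp only [Finset.sum_apply, Pi.smul_apply, smul_eq_mul, Pi.zero_apply]
    rw [← hi]
    exact Finset.sum_congr rfl fun j _ => by
      by_cases h : j = z0 <;> simp [h, mul_comm]
  have e3 : ∑ j, (if j = z0 then (0:ℝ) else x j) • r j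
      = ∑ j ∈ Finset.univ.erase z0, x j • r j := by
    rw [← Finset.add_sum_erase _ _ (Finset.mem_univ z0)]
    rw [if_pos rfl, zero_smul, zero_add]
    exact Finset.sum_congr rfl fun j hj => by rw [if_neg (Finset.ne_of_mem_erase hj)]
  have e4 : ∑ j : Fin n, x j • (if j = z0 then d else r j)
      = x z0 • d + ∑ j ∈ Finset.univ.erase z0, x j • r j := by
    rw [← Finset.add_sum_erase _ _ (Finset.mem_univ z0)]
    rw [if_pos rfl]
    congr 1
    exact Finset.sum_congr rfl fun j hj => by rw [if_neg (Finset.ne_of_mem_erase hj)]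
  have hg : ∀ j, x z0 * c j + (if j = z0 then 0 else x j) = 0 := by
    apply huniq
    have e1 : ∑ j, (x z0 * c j + if j = z0 then (0:ℝ) else x j) • r j
        = (∑ j, (x z0 * c j) • r j) + ∑ j, (if j = z0 then (0:ℝ) else x j) • r j := by
      rw [← Finset.sum_add_distrib]
      exact Finset.sum_congr rfl fun j _ => add_smul _ _ _
    have e2 : ∑ j, (x z0 * c j) • r j = x z0 • d := by
      rw [hd', Finset.smul_sum]
      exact Finset.sum_congr rfl fun j _ => (smul_smul _ _ _).symm
    rw [e1, e2, e3]
    rw [e4] at hsum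
    exact hsum
  have hxz0 : x z0 ≠ 0 := by
    intro h0
    apply hx0
    funext j
    by_cases hj : j = z0
    · rw [hj]; exact h0
    · have h := hg j; rw [if_neg hj, h0, zero_mul, zero_add] at h; exact h
  have hcz0 : c z0 = 0 := by
    have h := hg z0
    rw [if_pos rfl, add_zero] at h
    exact (mul_eq_zero.mp h).resolve_left hxz0
  -- Rankine-Hugoniot in eigen-coordinates
  have hrh : ∀ j, σ' * c j = b j * (a j - sp) := by
    have lhs : σ' • d = ∑ j, (σ' * c j) • r j := by
      rw [hd', Finset.smul_sum]
      exact Finset.sum_congr rfl fun j _ => smul_smul _ _ _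
    have rhs : A.mulVec v' - sp • v' = ∑ j, (b j * (a j - sp)) • r j := by
      rw [hv', mulVec_sum', Finset.smul_sum, ← Finset.sum_sub_distrib]
      exact Finset.sum_congr rfl fun j _ => by
        rw [hb3, smul_smul, smul_smul, ← sub_smul]
        congr 1
        ring
    have hE : ∑ j, (σ' * c j) • r j = ∑ j, (b j * (a j - sp)) • r j :=
      lhs.symm.trans (hd1.trans rhs)
    have h0 : ∑ j, (σ' * c j - b j * (a j - sp)) • r j = 0 := by
      have h5 : ∑ j, ((σ' * c j) • r j - (b j * (a j - sp)) • r j) = 0 := by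
        rw [Finset.sum_sub_distrib, hE, sub_self]
      rw [← h5]
      exact Finset.sum_congr rfl fun j _ => sub_smul _ _ _
    intro j
    have h6 := huniq _ h0 j
    linarith
  -- positivity facts
  have hkpos : ∀ k : Fin n, k ≠ z0 → 0 < a k - sp := by
    intro k hk
    have h1 : (1:ℕ) ≤ (k:ℕ) := by
      rcases Nat.eq_zero_or_pos (k:ℕ) with h | h
      · exact absurd (Fin.ext (h.trans rfl) : k = z0) hk
      · exact h
    have h2 : z1 ≤ k := by rw [Fin.le_def]; simpa [hz1def] using h1
    have h3 := hb1.monotone h2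
    linarith
  have hp : ∀ k, 0 < r k ⬝ᵥ P.mulVec (r k) := by
    intro k
    have h := hP.dotProduct_mulVec_pos (hb2 k)
    simpa using h
  -- relative entropy condition in eigen-coordinates
  have hsum2 : v' ⬝ᵥ P.mulVec d = ∑ k, b k * c k * (r k ⬝ᵥ P.mulVec (r k)) := by
    rw [hv', hd', mulVec_sum']
    calc (∑ j, b j • r j) ⬝ᵥ (∑ k, c k • P.mulVec (r k))
        = ∑ j, ∑ k, b j * c k * (r j ⬝ᵥ P.mulVec (r k)) := by
          rw [show (∑ j, b j • r j) = ∑ j, (fun j => b j • r j) j from rfl, sum_dot]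
          exact Finset.sum_congr rfl fun j _ => by
            rw [smul_dotProduct, dot_sum, Finset.smul_sum]
            exact Finset.sum_congr rfl fun k _ => by
              rw [dotProduct_smul, smul_eq_mul, smul_eq_mul]
              ring
      _ = ∑ k, b k * c k * (r k ⬝ᵥ P.mulVec (r k)) := by
          apply Finset.sum_congr rfl
          intro j _
          apply Finset.sum_eq_single j
          · intro k _ hkj
            rw [horth j k (Ne.symm hkj), mul_zero]
          · intro h; exact absurd (Finset.mem_univ j) h
  set T : Fin n → ℝ := fun k => b k * c k * (r k ⬝ᵥ P.mulVec (r k)) with hTdef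
  have hTnonpos : ∀ k, T k ≤ 0 := by
    intro k
    by_cases hk : k = z0
    · simp only [hTdef, hk, hcz0, mul_zero, zero_mul, le_refl]
    · have h1 := hrh k
      have h2 := hkpos k hk
      have h3 := hp k
      have h4 : T k * (a k - sp) = σ' * (c k * c k) * (r k ⬝ᵥ P.mulVec (r k)) := by
        simp only [hTdef]
        linear_combination (-(c k * (r k ⬝ᵥ P.mulVec (r k)))) * h1
      have h5 : σ' * (c k * c k) * (r k ⬝ᵥ P.mulVec (r k)) ≤ 0 := by
        have h6 : 0 ≤ c k * c k := mul_self_nonneg _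
        have h8 : σ' * (c k * c k) ≤ 0 := mul_nonpos_of_nonpos_of_nonneg he h6
        exact mul_nonpos_of_nonpos_of_nonneg h8 (le_of_lt h3)
      by_contra h7
      push_neg at h7
      nlinarith [mul_pos h7 h2]
  have hsum0 : ∑ k, T k = 0 := by
    exact le_antisymm (Finset.sum_nonpos fun k _ => hTnonpos k) (hsum2 ▸ hf')
  have hTzero : ∀ k, T k = 0 := by
    intro k
    exact (Finset.sum_eq_zero_iff_of_nonpos fun k _ => hTnonpos k).mp hsum0 k
      (Finset.mem_univ k)
  -- conclude
  rcases he.lt_or_eq with hlt | heq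
  · -- σ' < 0 : all c k vanish, so d = 0, contradiction
    apply hdne
    rw [hd']
    apply Finset.sum_eq_zero
    intro k _
    by_cases hk : k = z0
    · rw [hk, hcz0, zero_smul]
    · have hT0 := hTzero k
      have h1 := hrh k
      have h2 := hkpos k hk
      have h3 := hp k
      have hck : c k = 0 := by
        by_contra hc0
        have hb0 : b k * c k = 0 := by
          rcases mul_eq_zero.mp hT0 with h | h
          · exact h
          · exact absurd h (ne_of_gt h3)
        rcases mul_eq_zero.mp hb0 with h | h
        · rw [h, zero_mul] at h1
          rcases mul_eq_zero.mp h1 with h' | h'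
          · exact absurd h' (ne_of_lt hlt)
          · exact hc0 h'
        · exact hc0 h
      rw [hck, zero_smul]
  · -- σ' = 0 : v' = 0 as well, contradicting nondegeneracy
    apply hd2
    refine ⟨heq, ?_⟩
    rw [hv']
    apply Finset.sum_eq_zero
    intro k _
    have h1 := hrh k
    rw [heq, zero_mul] at h1
    have hak : a k - sp ≠ 0 := by
      by_cases hk : k = z0
      · rw [hk]; intro h; rw [sub_eq_zero] at h; linarith
      · exact ne_of_gt (hkpos k hk)
    have hbk : b k = 0 := by
      rcases mul_eq_zero.mp h1.symm with h | h
      · exact h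
      · exact absurd h hak
    rw [hbk, zero_smul]

/-- Main theorem: under the pointwise Leger–Vasseur relative
entropy conditions (i′)-(ii′) at the right endstate of a Lax 1-shock, together
with convexity of the entropy at the right state, strict hyperbolicity at the
right state, and nondegeneracy of the linearized Rankine–Hugoniot equation,
the Lopatinski condition holds:
`det [ (u₊ − u)  r₂  r₃ … rₙ ] ≠ 0`. -/
theorem lopatinski_of_relative_entropy_conditions {n : ℕ} (hn : 2 ≤ n)
    (f : (Fin n → ℝ) → (Fin n → ℝ)) (hf : ContDiff ℝ 1 f)
    (η : (Fin n → ℝ) → ℝ) (hη : ContDiff ℝ 2 η)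
    (u : Fin n → ℝ) (sPlus : ℝ) (hsPlus : 0 ≤ sPlus)
    (S : ℝ → (Fin n → ℝ)) (σ : ℝ → ℝ)
    (v' : Fin n → ℝ) (σ' : ℝ)
    (hS : HasDerivAt S v' sPlus) (hσ : HasDerivAt σ σ' sPlus)
    (hne : S sPlus ≠ u)
    -- (a) convex entropy at the right state: P₊ := ∇²η(u₊) is symmetric
    -- positive definite and P₊ · A₊ is symmetric, A₊ := Df(u₊)
    (ha1 : (hessMatrix η (S sPlus)).PosDef)
    (ha2 : (hessMatrix η (S sPlus) * jacMatrix f (S sPlus)).IsSymm)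
    -- (b) strict hyperbolicity at the right state: distinct real eigenvalues
    -- a₁ < a₂ < … < aₙ with nonzero eigenvectors r₁, …, rₙ
    (a : Fin n → ℝ) (r : Fin n → (Fin n → ℝ))
    (hb1 : StrictMono a) (hb2 : ∀ j, r j ≠ 0)
    (hb3 : ∀ j, (jacMatrix f (S sPlus)).mulVec (r j) = a j • r j)
    -- (c) Lax 1-shock inequalities at the right state: a₁ < σ(s₊) < a₂
    (hc1 : a ⟨0, by omega⟩ < σ sPlus) (hc2 : σ sPlus < a ⟨1, by omega⟩)
    -- (d) linearized Rankine–Hugoniot equation with nontrivial solution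
    (hd1 : σ' • (S sPlus - u)
      = (jacMatrix f (S sPlus)
          - σ sPlus • (1 : Matrix (Fin n) (Fin n) ℝ)).mulVec v')
    (hd2 : ¬(σ' = 0 ∧ v' = 0))
    -- (e) condition (i′): σ′(s₊) ≤ 0
    (he : σ' ≤ 0)
    -- (f) condition (ii′): relative entropy nondecreasing at s₊
    (hf' : 0 ≤ deriv (fun s => relEntropy η u (S s)) sPlus) :
    -- Lopatinski condition: det of the matrix with columns
    -- u₊ − u, r₂, …, rₙ is nonzero
    (Matrix.of fun i j : Fin n =>
      if j = ⟨0, by omega⟩ then (S sPlus - u) i else r j i).det ≠ 0 := by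
  have hw := relEntropy_hasDerivAt η hη u S v' sPlus hS
  have hderiv := hw.deriv
  rw [hderiv] at hf'
  have hB2 : fderiv ℝ (fderiv ℝ η) (S sPlus) v' (S sPlus - u)
      = v' ⬝ᵥ (hessMatrix η (S sPlus)).mulVec (S sPlus - u) := by
    rw [bilin_apply]
    simp only [dotProduct, Matrix.mulVec, Finset.mul_sum]
    refine Finset.sum_congr rfl fun i _ => Finset.sum_congr rfl fun j _ => ?_
    rw [hess_entry η hη]
    ring
  rw [hB2] at hf'
  have hd1' : σ' • (S sPlus - u)
      = (jacMatrix f (S sPlus)).mulVec v' - σ sPlus • v' := by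
    rw [hd1, Matrix.sub_mulVec, Matrix.smul_mulVec, Matrix.one_mulVec]
  exact key_alg hn (hessMatrix η (S sPlus)) (jacMatrix f (S sPlus)) ha1 ha2 a r
    hb1 hb2 hb3 (σ sPlus) σ' (S sPlus - u) v' hc1 hc2 (sub_ne_zero.mpr hne)
    hd1' hd2 he hf'
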